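/- For density operators ρ, σ on a finite-dimensional Hilbert space and positive reals p, q, the fidelity satisfies √(pq)·F(ρ,σ) ≥ ½(p + q) − ½‖pρ − qσ‖₁, where F(ρ,σ) = ‖√ρ·√σ‖₁. -/

import Mathlib

open scoped ComplexOrder

/-- The square root of a positive semidefinite matrix, as `Matrix.PosSemidef.sqrt` was
defined in the older Mathlib (removed since). -/
noncomputable def Matrix.PosSemidef.sqrt {n : Type*} [Fintype n] [DecidableEq n] {𝕜 : Type*}
    [RCLike 𝕜] {A : Matrix n n 𝕜} (hA : A.PosSemidef) : Matrix n n 𝕜 :=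
  hA.1.eigenvectorUnitary.1 * Matrix.diagonal ((↑) ∘ (√·) ∘ hA.1.eigenvalues) *
    (star hA.1.eigenvectorUnitary : Matrix n n 𝕜)

/-- The operator absolute value `√(AᴴA)` of a matrix. -/
noncomputable def matAbs {n : ℕ} (A : Matrix (Fin n) (Fin n) ℂ) : Matrix (Fin n) (Fin n) ℂ :=
  (Matrix.posSemidef_conjTranspose_mul_self A).sqrt

/-- The trace norm `‖A‖₁ = tr √(AᴴA)`. -/
noncomputable def traceNorm {n : ℕ} (A : Matrix (Fin n) (Fin n) ℂ) : ℝ :=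
  ((matAbs A).trace).re

/-- The positive part `A⁺ = (|A| + A)/2` of a self-adjoint matrix `A`, so that
`A = A⁺ - A⁻` with `A⁺, A⁻ ≥ 0`. -/
noncomputable def matPosPart {n : ℕ} (A : Matrix (Fin n) (Fin n) ℂ) : Matrix (Fin n) (Fin n) ℂ :=
  (2 : ℂ)⁻¹ • (matAbs A + A)

/-- A density operator: positive semidefinite with unit trace. -/
def IsDensity {n : ℕ} (ρ : Matrix (Fin n) (Fin n) ℂ) : Prop :=
  ρ.PosSemidef ∧ ρ.trace = 1

/-- A POVM with `r` outcomes: positive semidefinite effects summing to the identity. -/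
def IsPOVM {n r : ℕ} (M : Fin r → Matrix (Fin n) (Fin n) ℂ) : Prop :=
  (∀ i, (M i).PosSemidef) ∧ ∑ i, M i = 1

/-- Success probability `∑ i, q i * tr (ρ i * M i)` of a measurement. -/
noncomputable def successProb {n r : ℕ} (q : Fin r → ℝ)
    (ρ M : Fin r → Matrix (Fin n) (Fin n) ℂ) : ℝ :=
  ∑ i, q i * ((ρ i * M i).trace).re

/-- Optimal success probability under minimum-error discrimination. -/
noncomputable def optSuccess {n r : ℕ} (q : Fin r → ℝ)
    (ρ : Fin r → Matrix (Fin n) (Fin n) ℂ) : ℝ :=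
  sSup {p | ∃ M, IsPOVM M ∧ p = successProb q ρ M}

/-- The fidelity `F(ρ,σ) = ‖√ρ √σ‖₁` of two positive semidefinite matrices. -/
noncomputable def fidelity {n : ℕ} {ρ σ : Matrix (Fin n) (Fin n) ℂ}
    (hρ : ρ.PosSemidef) (hσ : σ.PosSemidef) : ℝ :=
  traceNorm (hρ.sqrt * hσ.sqrt)

/-! Put `S = √p √ρ` and `T = √q √σ`. Then `S² = pρ`, `T² = qσ` and
`Re tr (S - T)² = p + q - 2 √(pq) Re tr (√ρ √σ)`, so since `Re tr M ≤ ‖M‖₁` it suffices to prove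
the Powers–Størmer inequality `tr (S - T)² ≤ ‖S² - T²‖₁`.
Write `X = S - T = X₊ - X₋`, `Y = S + T`, and let `U = sign X`, a unitary with `UX = XU = |X|`.
From `S² - T² = (XY + YX) / 2` we get `tr (U (S² - T²)) = tr (|X| Y)`, and
`tr (|X| Y) - tr X² = tr (X₊ (Y - X)) + tr (X₋ (Y + X)) ≥ 0` because `Y - X = 2T` and
`Y + X = 2S` are positive. Finally `Re tr (U M) ≤ ‖U M‖₁ = ‖M‖₁`. -/

open scoped MatrixOrder
open Matrix

section

variable {m : Type*} [Fintype m]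

lemma Matrix.re_diag_le_sqrt_diag_conjTranspose_mul_self (N : Matrix m m ℂ) (i : m) :
    (N i i).re ≤ √((Nᴴ * N) i i).re := by
  have hcol : ((Nᴴ * N) i i).re = ∑ j, Complex.normSq (N j i) := by
    simp [mul_apply, Complex.normSq_apply, Complex.re_sum]
  calc (N i i).re ≤ ‖N i i‖ := Complex.re_le_norm _
    _ = √(Complex.normSq (N i i)) := Complex.norm_def _
    _ ≤ √((Nᴴ * N) i i).re := by
      rw [hcol]
      exact Real.sqrt_le_sqrt <| Finset.single_le_sum (f := fun j => Complex.normSq (N j i))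
        (fun j _ => Complex.normSq_nonneg _) (Finset.mem_univ i)

lemma Matrix.re_trace_sub_mul_sub (S T : Matrix m m ℂ) :
    ((S - T) * (S - T)).trace.re =
      (S * S).trace.re + (T * T).trace.re - 2 * (S * T).trace.re := by
  have h : (S - T) * (S - T) = S * S + T * T - (S * T + T * S) := by noncomm_ring
  rw [h, trace_sub, trace_add, trace_add, trace_mul_comm T S]
  simp only [Complex.sub_re, Complex.add_re]
  ring

variable [DecidableEq m] {A B : Matrix m m ℂ}

lemma Matrix.PosSemidef.sqrt_eq_cfc (hA : A.PosSemidef) : hA.sqrt = cfc Real.sqrt A := by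
  rw [hA.1.cfc_eq, IsHermitian.cfc, Unitary.conjStarAlgAut_apply]
  rfl

lemma Matrix.PosSemidef.posSemidef_sqrt (hA : A.PosSemidef) : hA.sqrt.PosSemidef := by
  rw [hA.sqrt_eq_cfc]
  exact (cfc_nonneg fun x _ => Real.sqrt_nonneg x).posSemidef

lemma Matrix.PosSemidef.sqrt_mul_self (hA : A.PosSemidef) : hA.sqrt * hA.sqrt = A := by
  rw [hA.sqrt_eq_cfc, ← cfc_mul _ _ A (A.finite_real_spectrum.continuousOn _)
    (A.finite_real_spectrum.continuousOn _)]
  conv_rhs => rw [← cfc_id' ℝ A hA.1]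
  exact cfc_congr fun x hx => Real.mul_self_sqrt (spectrum_nonneg_of_nonneg hA.nonneg hx)

lemma Matrix.PosSemidef.trace_sqrt (hA : A.PosSemidef) :
    hA.sqrt.trace = ∑ i, (√(hA.1.eigenvalues i) : ℂ) := by
  rw [Matrix.PosSemidef.sqrt, trace_mul_cycle, Unitary.coe_star_mul_self, one_mul, trace_diagonal]
  rfl

lemma Matrix.PosSemidef.trace_mul_nonneg (hA : A.PosSemidef) (hB : B.PosSemidef) :
    0 ≤ (A * B).trace := by
  have hconj := hB.conjTranspose_mul_mul_same hA.sqrt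
  have h : (hA.sqrt * hA.sqrt * B).trace = (hA.sqrtᴴ * B * hA.sqrt).trace := by
    rw [hA.posSemidef_sqrt.1.eq, mul_assoc, trace_mul_comm, mul_assoc]
  rw [← hA.sqrt_mul_self, h]
  exact hconj.trace_nonneg

lemma Matrix.IsHermitian.re_trace_mul_self_le_re_trace_cfc_abs_mul {X Y : Matrix m m ℂ}
    (hX : X.IsHermitian) (hYsub : (Y - X).PosSemidef) (hYadd : (Y + X).PosSemidef) :
    (X * X).trace.re ≤ (cfc (fun x : ℝ => |x|) X * Y).trace.re := by
  set Xpos := cfc (fun x : ℝ => x⁺) X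
  set Xneg := cfc (fun x : ℝ => x⁻) X
  have hpos : Xpos.PosSemidef := (cfc_nonneg fun x _ => posPart_nonneg x).posSemidef
  have hneg : Xneg.PosSemidef := (cfc_nonneg fun x _ => negPart_nonneg x).posSemidef
  have hsub : Xpos - Xneg = X := by
    rw [← cfc_sub _ _ X (X.finite_real_spectrum.continuousOn _)
      (X.finite_real_spectrum.continuousOn _)]
    simp only [posPart_sub_negPart]
    exact cfc_id' ℝ X hX
  have hadd : Xpos + Xneg = cfc (fun x : ℝ => |x|) X := by
    rw [← cfc_add X _ _ (X.finite_real_spectrum.continuousOn _)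
      (X.finite_real_spectrum.continuousOn _)]
    simp only [posPart_add_negPart]
  have hdecomp : cfc (fun x : ℝ => |x|) X * Y - X * X = Xpos * (Y - X) + Xneg * (Y + X) := by
    rw [← hadd, ← hsub]
    noncomm_ring
  have hnonneg := add_nonneg (hpos.trace_mul_nonneg hYsub) (hneg.trace_mul_nonneg hYadd)
  rw [← trace_add, ← hdecomp, trace_sub] at hnonneg
  simpa using (Complex.nonneg_iff.mp hnonneg).1

lemma Matrix.IsHermitian.exists_unitary_mul_eq_cfc_abs {X : Matrix m m ℂ} (hX : X.IsHermitian) :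
    ∃ U : Matrix m m ℂ, Uᴴ * U = 1 ∧ U * X = cfc (fun x : ℝ => |x|) X ∧
      X * U = cfc (fun x : ℝ => |x|) X := by
  have hX' : IsSelfAdjoint X := hX
  have hspec := X.finite_real_spectrum (𝕜 := ℂ)
  have hsign (x : ℝ) : (if x < 0 then -1 else 1) * x = |x| := by
    split_ifs with h
    · simp [abs_of_neg h]
    · simp [abs_of_nonneg (not_lt.mp h)]
  set U := cfc (fun x : ℝ => if x < 0 then -1 else 1) X
  refine ⟨U, ?_, ?_, ?_⟩
  · rw [← star_eq_conjTranspose, ← cfc_star, ← cfc_mul _ _ X (hspec.continuousOn _)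
      (hspec.continuousOn _)]
    convert cfc_const_one ℝ X hX' using 2
    funext x
    split_ifs <;> norm_num
  · conv_lhs => rw [← cfc_id' ℝ X hX']
    rw [← cfc_mul _ _ X (hspec.continuousOn _) (hspec.continuousOn _)]
    exact cfc_congr fun x _ => hsign x
  · conv_lhs => rw [← cfc_id' ℝ X hX']
    rw [← cfc_mul _ _ X (hspec.continuousOn _) (hspec.continuousOn _)]
    exact cfc_congr fun x _ => (mul_comm _ _).trans (hsign x)

end

section TraceNorm

variable {n : ℕ}

lemma re_trace_le_traceNorm (M : Matrix (Fin n) (Fin n) ℂ) : M.trace.re ≤ traceNorm M := by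
  have hH := posSemidef_conjTranspose_mul_self M
  set V : Matrix (Fin n) (Fin n) ℂ := (hH.1.eigenvectorUnitary : Matrix (Fin n) (Fin n) ℂ)
  have hVV : V * Vᴴ = 1 := Unitary.coe_mul_star_self _
  -- in an eigenbasis of `Mᴴ M` the columns of `M` have squared norms the eigenvalues `λᵢ`,
  -- which bounds the diagonal entries by `√λᵢ`
  set N := Vᴴ * M * V
  have htrace : N.trace = M.trace := by rw [trace_mul_cycle, hVV, one_mul]
  have hdiag : Nᴴ * N = diagonal (RCLike.ofReal ∘ hH.1.eigenvalues) := by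
    have := hH.1.conjStarAlgAut_star_eigenvectorUnitary
    rw [Unitary.conjStarAlgAut_star_apply] at this
    rw [← this]
    simp only [N, conjTranspose_mul, conjTranspose_conjTranspose, mul_assoc]
    rw [← mul_assoc V, hVV, one_mul]
    rfl
  rw [← htrace, traceNorm, matAbs, hH.trace_sqrt, trace, Complex.re_sum, Complex.re_sum]
  refine Finset.sum_le_sum fun i _ => ?_
  simpa [hdiag] using re_diag_le_sqrt_diag_conjTranspose_mul_self N i

lemma traceNorm_unitary_mul {U M : Matrix (Fin n) (Fin n) ℂ} (hU : Uᴴ * U = 1) :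
    traceNorm (U * M) = traceNorm M := by
  have h : (U * M)ᴴ * (U * M) = Mᴴ * M := by
    rw [conjTranspose_mul, mul_assoc, ← mul_assoc Uᴴ, hU, one_mul]
  unfold traceNorm matAbs
  congr 3

lemma re_trace_sub_mul_sub_le_traceNorm {S T : Matrix (Fin n) (Fin n) ℂ}
    (hS : S.PosSemidef) (hT : T.PosSemidef) :
    ((S - T) * (S - T)).trace.re ≤ traceNorm (S * S - T * T) := by
  set X := S - T
  set Y := S + T
  have hX : X.IsHermitian := hS.1.sub hT.1
  obtain ⟨U, hU, hUX, hXU⟩ := hX.exists_unitary_mul_eq_cfc_abs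
  have hsq : (S * S - T * T) + (S * S - T * T) = X * Y + Y * X := by
    simp only [X, Y]
    noncomm_ring
  have htrace : (U * (S * S - T * T)).trace = (cfc (fun x : ℝ => |x|) X * Y).trace := by
    have h2 : (U * (S * S - T * T)).trace + (U * (S * S - T * T)).trace
        = (cfc (fun x : ℝ => |x|) X * Y).trace + (cfc (fun x : ℝ => |x|) X * Y).trace := by
      rw [← trace_add, ← mul_add, hsq, mul_add, trace_add, ← mul_assoc, hUX,
        ← mul_assoc U Y X, trace_mul_cycle U Y X, hXU]
    linear_combination h2 / 2
  calc ((S - T) * (S - T)).trace.re ≤ (cfc (fun x : ℝ => |x|) X * Y).trace.re :=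
        hX.re_trace_mul_self_le_re_trace_cfc_abs_mul (by simpa [X, Y] using hT.add hT)
          (by simpa [X, Y] using hS.add hS)
    _ = (U * (S * S - T * T)).trace.re := by rw [htrace]
    _ ≤ traceNorm (U * (S * S - T * T)) := re_trace_le_traceNorm _
    _ = traceNorm (S * S - T * T) := traceNorm_unitary_mul hU

lemma IsDensity.re_trace_ofReal_smul {ρ : Matrix (Fin n) (Fin n) ℂ} (hρ : IsDensity ρ) (c : ℝ) :
    ((c : ℂ) • ρ).trace.re = c := by
  simp [trace_smul, hρ.2]

end TraceNorm

theorem stmt16 {n : ℕ} {ρ σ : Matrix (Fin n) (Fin n) ℂ} (p q : ℝ)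
    (hρ : IsDensity ρ) (hσ : IsDensity σ) (hp : 0 < p) (hq : 0 < q) :
    Real.sqrt (p * q) * fidelity hρ.1 hσ.1
      ≥ (1 / 2) * (p + q) - (1 / 2) * traceNorm ((p : ℂ) • ρ - (q : ℂ) • σ) := by
  set S := (√p : ℂ) • hρ.1.sqrt
  set T := (√q : ℂ) • hσ.1.sqrt
  have hS : S.PosSemidef := hρ.1.posSemidef_sqrt.smul (by positivity)
  have hT : T.PosSemidef := hσ.1.posSemidef_sqrt.smul (by positivity)
  have hSS : S * S = (p : ℂ) • ρ := by
    rw [smul_mul_smul_comm, hρ.1.sqrt_mul_self, ← Complex.ofReal_mul, Real.mul_self_sqrt hp.le]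
  have hTT : T * T = (q : ℂ) • σ := by
    rw [smul_mul_smul_comm, hσ.1.sqrt_mul_self, ← Complex.ofReal_mul, Real.mul_self_sqrt hq.le]
  have hST : (S * T).trace.re = √(p * q) * (hρ.1.sqrt * hσ.1.sqrt).trace.re := by
    rw [smul_mul_smul_comm, trace_smul, ← Complex.ofReal_mul, ← Real.sqrt_mul hp.le, smul_eq_mul,
      Complex.re_ofReal_mul]
  have hPS := re_trace_sub_mul_sub_le_traceNorm hS hT
  rw [re_trace_sub_mul_sub, hSS, hTT, hST, hρ.re_trace_ofReal_smul,
    hσ.re_trace_ofReal_smul] at hPS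
  have hF := mul_le_mul_of_nonneg_left (re_trace_le_traceNorm (hρ.1.sqrt * hσ.1.sqrt))
    (Real.sqrt_nonneg (p * q))
  rw [fidelity]
  linarith
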